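/- arXiv:0903.5149 — 4 statements merged into one kernel-verified Lean document; each statement's English description precedes it below -/
import Mathlib

section
/- For all vectors p₁,…,p₆ ∈ k³, one has Q(p₁,…,p₆) = 0 if and only if there exists a nonzero homogeneous polynomial q ∈ k[X₀,X₁,X₂] of degree 2 with q(pᵢ) = 0 for all i = 1,…,6 (i.e. the six points lie on a conic). Moreover Q is skew-symmetric: for every permutation σ of {1,…,6}, Q(p_{σ(1)},…,p_{σ(6)}) = sign(σ)·Q(p₁,…,p₆). -/
/-!
Sending a point `x ∈ k³` to its vector of quadratic monomials `(x₀², x₁², x₂², x₀x₁, x₀x₂, x₁x₂)`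
identifies ternary quadratic forms with linear forms on `k⁶`. Hence six points lie on a conic iff
the 6 × 6 matrix of these vectors has a nonzero kernel, i.e. iff its determinant vanishes, and
Coble's identity `Q = -det` (a polynomial identity, checked by expansion) turns this into `Q = 0`.
Permuting the points permutes the rows of the matrix, which gives the skew-symmetry.
-/

open MvPolynomial

/-- The determinant of the 3×3 matrix with rows `a`, `b`, `c`. -/
noncomputable def det3 {R : Type*} [CommRing R] (a b c : Fin 3 → R) : R :=
  Matrix.det (Matrix.of ![a, b, c])

/-- Coble's invariant `Q(p₁,…,p₆) = [134][156][235][246] − [135][146][234][256]`. -/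
noncomputable def cobleQ {k : Type*} [Field k] (p : Fin 6 → Fin 3 → k) : k :=
  det3 (p 0) (p 2) (p 3) * det3 (p 0) (p 4) (p 5) *
      det3 (p 1) (p 2) (p 4) * det3 (p 1) (p 3) (p 5) -
    det3 (p 0) (p 2) (p 4) * det3 (p 0) (p 3) (p 5) *
      det3 (p 1) (p 2) (p 3) * det3 (p 1) (p 4) (p 5)

open Matrix

theorem Finsupp.exists_eq_single_add_single_of_degree_eq_two {σ : Type*} {d : σ →₀ ℕ}
    (hd : d.degree = 2) : ∃ a b, d = single a 1 + single b 1 := by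
  have hcard : (toMultiset d).card = 2 := by rw [card_toMultiset, ← hd]; rfl
  obtain ⟨a, b, hab⟩ := Multiset.card_eq_two.mp hcard
  classical
  refine ⟨a, b, toMultiset_eq_iff.mp hab |>.trans ?_⟩
  rw [Multiset.insert_eq_cons, ← Multiset.singleton_add, Multiset.toFinsupp_add,
    Multiset.toFinsupp_singleton, Multiset.toFinsupp_singleton]

-- This column order fixes the sign in `cobleQ_eq_neg_det_veronese`.
def quadPair : Fin 6 → Fin 3 × Fin 3 := ![(0, 0), (1, 1), (2, 2), (0, 1), (0, 2), (1, 2)]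

noncomputable def quadMonomial (j : Fin 6) : Fin 3 →₀ ℕ :=
  Finsupp.single (quadPair j).1 1 + Finsupp.single (quadPair j).2 1

theorem degree_quadMonomial (j : Fin 6) : (quadMonomial j).degree = 2 := by
  simp [quadMonomial]

theorem quadMonomial_injective : Function.Injective quadMonomial := by
  intro i j h
  have hm := congrArg Finsupp.toMultiset h
  simp only [quadMonomial, Finsupp.toMultiset_add, Finsupp.toMultiset_single, one_nsmul] at hm
  clear h
  revert i j
  decide

theorem exists_quadMonomial_eq {d : Fin 3 →₀ ℕ} (hd : d.degree = 2) :
    ∃ j, quadMonomial j = d := by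
  obtain ⟨a, b, rfl⟩ := Finsupp.exists_eq_single_add_single_of_degree_eq_two hd
  have hab : ∃ j, quadPair j = (a, b) ∨ quadPair j = (b, a) := by clear hd; revert a b; decide
  obtain ⟨j, hj | hj⟩ := hab
  · exact ⟨j, by simp [quadMonomial, hj]⟩
  · exact ⟨j, by simp [quadMonomial, hj, add_comm]⟩

def veronese {ι R : Type*} [CommRing R] (p : ι → Fin 3 → R) : Matrix ι (Fin 6) R :=
  Matrix.of fun i j => p i (quadPair j).1 * p i (quadPair j).2

noncomputable def quadricOfCoeffs {R : Type*} [CommRing R] (v : Fin 6 → R) :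
    MvPolynomial (Fin 3) R :=
  ∑ j, monomial (quadMonomial j) (v j)

section
variable {R : Type*} [CommRing R]

theorem isHomogeneous_quadricOfCoeffs (v : Fin 6 → R) : (quadricOfCoeffs v).IsHomogeneous 2 :=
  IsHomogeneous.sum _ _ _ fun j _ => isHomogeneous_monomial _ (degree_quadMonomial j)

theorem coeff_quadMonomial_quadricOfCoeffs (v : Fin 6 → R) (j : Fin 6) :
    coeff (quadMonomial j) (quadricOfCoeffs v) = v j := by
  simp [quadricOfCoeffs, coeff_sum, coeff_monomial, quadMonomial_injective.eq_iff]

theorem eval_monomial_quadMonomial (x : Fin 3 → R) (j : Fin 6) (c : R) :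
    eval x (monomial (quadMonomial j) c) = c * (x (quadPair j).1 * x (quadPair j).2) := by
  rw [eval_monomial, quadMonomial, Finsupp.prod_add_index' (by simp) (by simp [pow_add]),
    Finsupp.prod_single_index (by simp), Finsupp.prod_single_index (by simp), pow_one, pow_one]

theorem eval_quadricOfCoeffs {ι : Type*} (p : ι → Fin 3 → R) (v : Fin 6 → R) (i : ι) :
    eval (p i) (quadricOfCoeffs v) = (veronese p *ᵥ v) i := by
  simp only [quadricOfCoeffs, map_sum, eval_monomial_quadMonomial, mulVec, dotProduct, veronese,
    of_apply, mul_comm]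

theorem quadricOfCoeffs_coeff {q : MvPolynomial (Fin 3) R} (hq : q.IsHomogeneous 2) :
    quadricOfCoeffs (fun j => coeff (quadMonomial j) q) = q := by
  ext d
  rw [quadricOfCoeffs, coeff_sum]
  simp only [coeff_monomial]
  by_cases hd : d.degree = 2
  · obtain ⟨j, rfl⟩ := exists_quadMonomial_eq hd
    simp [quadMonomial_injective.eq_iff]
  · rw [hq.coeff_eq_zero hd]
    refine Finset.sum_eq_zero fun j _ => if_neg ?_
    rintro rfl
    exact hd (degree_quadMonomial j)

theorem exists_quadric_iff_exists_mulVec_veronese_eq_zero {ι : Type*} (p : ι → Fin 3 → R) :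
    (∃ q : MvPolynomial (Fin 3) R, q ≠ 0 ∧ q.IsHomogeneous 2 ∧ ∀ i, eval (p i) q = 0) ↔
      ∃ v, v ≠ 0 ∧ veronese p *ᵥ v = 0 := by
  constructor
  · rintro ⟨q, hq0, hq, hpq⟩
    refine ⟨fun j => coeff (quadMonomial j) q, fun hv => hq0 ?_, ?_⟩
    · rw [← quadricOfCoeffs_coeff hq, hv]
      simp [quadricOfCoeffs]
    · ext i
      rw [Pi.zero_apply, ← eval_quadricOfCoeffs, quadricOfCoeffs_coeff hq, hpq]
  · rintro ⟨v, hv0, hv⟩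
    refine ⟨quadricOfCoeffs v, fun hq => hv0 ?_, isHomogeneous_quadricOfCoeffs v, fun i => ?_⟩
    · ext j
      rw [← coeff_quadMonomial_quadricOfCoeffs v j, hq, coeff_zero, Pi.zero_apply]
    · rw [eval_quadricOfCoeffs, hv, Pi.zero_apply]

end

theorem veronese_comp {ι ι' R : Type*} [CommRing R] (p : ι → Fin 3 → R) (f : ι' → ι) :
    veronese (p ∘ f) = (veronese p).submatrix f id :=
  rfl

theorem cobleQ_eq_neg_det_veronese {k : Type*} [Field k] (p : Fin 6 → Fin 3 → k) :
    cobleQ p = -(veronese p).det := by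
  -- Laplace expansion with indices kept as iterated `Fin.succ 0`, on which `Fin.succAbove` reduces.
  simp (maxSteps := 10000000) only [det_succ_row_zero, Fin.sum_univ_succ, submatrix_apply,
    Fin.zero_succAbove, Fin.succ_succAbove_zero, Fin.succ_succAbove_succ, det_unique,
    Fin.default_eq_zero, Fin.val_zero, Fin.val_succ, Fin.sum_univ_zero, veronese, of_apply,
    quadPair, cons_val_zero, cons_val_succ, pow_succ, pow_zero, one_mul, neg_one_mul]
  simp only [cobleQ, det3, det_fin_three, of_apply, cons_val_zero, cons_val_one, cons_val_two,
    head_cons, tail_cons, Fin.succ_zero_eq_one, Fin.reduceSucc]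
  ring

theorem cobleQ_comp_perm {k : Type*} [Field k] (p : Fin 6 → Fin 3 → k)
    (σ : Equiv.Perm (Fin 6)) :
    cobleQ (p ∘ σ) = ((Equiv.Perm.sign σ : ℤ) : k) * cobleQ p := by
  rw [cobleQ_eq_neg_det_veronese, cobleQ_eq_neg_det_veronese, veronese_comp, det_permute, mul_neg]

theorem cobleQ_vanishes_iff_conic_and_skew_general (k : Type*) [Field k] :
    (∀ p : Fin 6 → Fin 3 → k,
      cobleQ p = 0 ↔ ∃ q : MvPolynomial (Fin 3) k, q ≠ 0 ∧ q.IsHomogeneous 2 ∧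
        ∀ i, eval (p i) q = 0) ∧
    (∀ (p : Fin 6 → Fin 3 → k) (σ : Equiv.Perm (Fin 6)),
      cobleQ (p ∘ σ) = ((Equiv.Perm.sign σ : ℤ) : k) * cobleQ p) := by
  refine ⟨fun p => ?_, cobleQ_comp_perm⟩
  rw [exists_quadric_iff_exists_mulVec_veronese_eq_zero, exists_mulVec_eq_zero_iff,
    cobleQ_eq_neg_det_veronese, neg_eq_zero]

/-- `Q(p₁,…,p₆)` vanishes if and only if the six points lie on a conic, and `Q` is
skew-symmetric under permutations of the six points. -/
theorem cobleQ_vanishes_iff_conic_and_skew (k : Type*) [Field k] [CharZero k]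
    [IsAlgClosed k] :
    (∀ p : Fin 6 → Fin 3 → k,
      cobleQ p = 0 ↔ ∃ q : MvPolynomial (Fin 3) k, q ≠ 0 ∧ q.IsHomogeneous 2 ∧
        ∀ i, eval (p i) q = 0) ∧
    (∀ (p : Fin 6 → Fin 3 → k) (σ : Equiv.Perm (Fin 6)),
      cobleQ (p ∘ σ) = ((Equiv.Perm.sign σ : ℤ) : k) * cobleQ p) :=
  cobleQ_vanishes_iff_conic_and_skew_general k
end

section
/- (Morley's differential identity.) Let D ∈ k[X₀,X₁,X₂] be any homogeneous cubic. In the polynomial ring k[ξ₀,ξ₁,ξ₂,X₀,X₁,X₂] define Eᵢ := Σⱼ ξⱼ·∂²D/∂Xⱼ∂Xᵢ for i = 0,1,2, and let M(ξ,X) be the determinant of the 3×3 matrix with rows (ξ₀, ξ₂, ξ₁), (X₀, X₂, X₁), (E₀, E₁, E₂). Then (∂²/∂X₀² + 2·∂²/∂X₁∂X₂) M(ξ,X) = 0 identically. (Here ∂₀² + 2∂₁∂₂ is the operator dual to the nonsingular conic θ = X₀² + 2X₁X₂, whose partial derivatives are proportional to the first two rows of the matrix.) -/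
/-!
Since `D` is a cubic, the Hessian row `E` is affine in `X`, so `M` is quadratic in `X` and a
second derivative `∂ₖ∂ₗ M` only keeps the terms where one derivative falls on the `X`-row and
the other on the `E`-row. As `∂ₖ` of the `X`-row is a constant unit vector, `(∂₀² + 2∂₁∂₂) M`
becomes `2ξ₀(∂₁E₂ - ∂₂E₁) + 2ξ₁(∂₀E₁ - ∂₁E₀) + 2ξ₂(∂₂E₀ - ∂₀E₂)`. This vanishes
because the Jacobian `∂ₖEᵢ = Σⱼ ξⱼ ∂ₖ∂ⱼ∂ᵢD` is symmetric, partial derivatives commuting.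
-/

open MvPolynomial

namespace MvPolynomial

theorem pderiv_pderiv_comm {σ R : Type*} [CommRing R] (i j : σ) (p : MvPolynomial σ R) :
    pderiv i (pderiv j p) = pderiv j (pderiv i p) := by
  classical
  have hbracket : ⁅pderiv i, pderiv j⁆ = (0 : Derivation R (MvPolynomial σ R) _) :=
    derivation_ext fun l => by
      rw [Derivation.commutator_apply, pderiv_X, pderiv_X]
      simp [Pi.single_apply, apply_ite]
  simpa [Derivation.commutator_apply, sub_eq_zero] using congr($hbracket p)

theorem pderiv_X_mul_of_ne {σ R : Type*} [CommSemiring R] {i j : σ} (h : j ≠ i)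
    (p : MvPolynomial σ R) : pderiv i (X j * p) = X j * pderiv i p := by
  rw [pderiv_mul, pderiv_X_of_ne h, zero_mul, zero_add]

theorem IsHomogeneous.pderiv_eq_zero_of_zero {σ R : Type*} [CommSemiring R]
    {φ : MvPolynomial σ R} (h : φ.IsHomogeneous 0) (i : σ) : pderiv i φ = 0 := by
  rw [← totalDegree_zero_iff_isHomogeneous, totalDegree_eq_zero_iff_eq_C] at h
  rw [h, pderiv_C]

theorem IsHomogeneous.pderiv_pderiv_pderiv_pderiv_eq_zero {σ R : Type*} [CommSemiring R]
    {φ : MvPolynomial σ R} (h : φ.IsHomogeneous 3) (a b c d : σ) :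
    pderiv a (pderiv b (pderiv c (pderiv d φ))) = 0 := by
  have h1 : (pderiv c (pderiv d φ)).IsHomogeneous 1 := h.pderiv.pderiv
  have h0 : (pderiv b (pderiv c (pderiv d φ))).IsHomogeneous 0 := h1.pderiv
  exact h0.pderiv_eq_zero_of_zero a

end MvPolynomial

theorem Derivation.apply_apply_det_fin_three {R A : Type*} [CommSemiring R] [CommRing A]
    [Algebra R A] (d d' : Derivation R A A) (a x e : Fin 3 → A)
    (ha : ∀ i, d (a i) = 0 ∧ d' (a i) = 0) (hx : ∀ i, d (d' (x i)) = 0)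
    (he : ∀ i, d (d' (e i)) = 0) :
    d (d' (Matrix.of ![a, x, e]).det) =
      (Matrix.of ![a, fun i => d (x i), fun i => d' (e i)]).det +
        (Matrix.of ![a, fun i => d' (x i), fun i => d (e i)]).det := by
  simp only [Matrix.det_fin_three, Matrix.of_apply, Matrix.cons_val', Matrix.cons_val_fin_one,
    Matrix.cons_val_zero, Matrix.cons_val_one, Matrix.cons_val, map_sub, map_add, leibniz,
    smul_eq_mul, ha, hx, he, mul_zero, add_zero, zero_add]
  ring

section HessianMulVec

variable {σ R : Type*} [CommRing R] [Fintype σ]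

noncomputable def hessianMulVec (p : MvPolynomial (σ ⊕ σ) R) (i : σ) :
    MvPolynomial (σ ⊕ σ) R :=
  ∑ j, X (Sum.inl j) * pderiv (Sum.inr j) (pderiv (Sum.inr i) p)

theorem pderiv_inr_hessianMulVec (p : MvPolynomial (σ ⊕ σ) R) (i l : σ) :
    pderiv (Sum.inr l) (hessianMulVec p i) =
      ∑ j, X (Sum.inl j) * pderiv (Sum.inr l) (pderiv (Sum.inr j) (pderiv (Sum.inr i) p)) := by
  simp only [hessianMulVec, map_sum, pderiv_X_mul_of_ne Sum.inl_ne_inr]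

theorem pderiv_inr_hessianMulVec_comm (p : MvPolynomial (σ ⊕ σ) R) (i l : σ) :
    pderiv (Sum.inr l) (hessianMulVec p i) = pderiv (Sum.inr i) (hessianMulVec p l) := by
  simp only [pderiv_inr_hessianMulVec]
  refine Finset.sum_congr rfl fun j _ => ?_
  rw [pderiv_pderiv_comm (Sum.inr j) (Sum.inr i), pderiv_pderiv_comm (Sum.inr l) (Sum.inr i),
    pderiv_pderiv_comm (Sum.inr l) (Sum.inr j)]

theorem pderiv_inr_pderiv_inr_hessianMulVec {p : MvPolynomial (σ ⊕ σ) R}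
    (hp : p.IsHomogeneous 3) (i l m : σ) :
    pderiv (Sum.inr l) (pderiv (Sum.inr m) (hessianMulVec p i)) = 0 := by
  simp only [pderiv_inr_hessianMulVec, map_sum, pderiv_X_mul_of_ne Sum.inl_ne_inr,
    hp.pderiv_pderiv_pderiv_pderiv_eq_zero, mul_zero, Finset.sum_const_zero]

end HessianMulVec

theorem conicDual_det_eq_zero {R : Type*} [CommRing R]
    (E : Fin 3 → MvPolynomial (Fin 3 ⊕ Fin 3) R)
    (hE_symm : ∀ i l, pderiv (Sum.inr l) (E i) = pderiv (Sum.inr i) (E l))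
    (hE_affine : ∀ i l m, pderiv (Sum.inr l) (pderiv (Sum.inr m) (E i)) = 0) :
    let M := Matrix.det (Matrix.of
      ![![X (Sum.inl 0), X (Sum.inl 2), X (Sum.inl 1)],
        ![X (Sum.inr 0), X (Sum.inr 2), X (Sum.inr 1)], ![E 0, E 1, E 2]])
    pderiv (Sum.inr 0) (pderiv (Sum.inr 0) M) +
      2 * pderiv (Sum.inr 1) (pderiv (Sum.inr 2) M) = 0 := by
  intro M
  have hξ : ∀ l i, pderiv (Sum.inr l)
      (![X (Sum.inl 0), X (Sum.inl 2), X (Sum.inl 1)] i : MvPolynomial (Fin 3 ⊕ Fin 3) R) = 0 := by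
    intro l i; fin_cases i <;> simp [pderiv_X]
  have hX : ∀ l m i, pderiv (Sum.inr l) (pderiv (Sum.inr m)
      (![X (Sum.inr 0), X (Sum.inr 2), X (Sum.inr 1)] i : MvPolynomial (Fin 3 ⊕ Fin 3) R)) = 0 := by
    intro l m i; fin_cases i <;> simp [pderiv_X, Pi.single_apply, apply_ite]
  have hE : ∀ l m i, pderiv (Sum.inr l) (pderiv (Sum.inr m) (![E 0, E 1, E 2] i)) = 0 := by
    intro l m i; fin_cases i <;> simp [hE_affine]
  simp only [M, Derivation.apply_apply_det_fin_three _ _ _ _ _ (fun i => ⟨hξ _ i, hξ _ i⟩)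
    (hX _ _) (hE _ _)]
  simp only [Matrix.det_fin_three, Matrix.of_apply, Matrix.cons_val', Matrix.cons_val_zero,
    Matrix.cons_val_one, Matrix.cons_val, Matrix.cons_val_fin_one, pderiv_X, ne_eq, Sum.inr.injEq,
    Fin.reduceEq, not_false_eq_true, Pi.single_eq_same, Pi.single_eq_of_ne, mul_zero, mul_one,
    zero_mul, sub_self, zero_sub, sub_zero, add_zero]
  linear_combination 2 * X (Sum.inl 0) * hE_symm 2 1 + 2 * X (Sum.inl 1) * hE_symm 1 0 +
    2 * X (Sum.inl 2) * hE_symm 0 2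

theorem morley_differential_identity_general (k : Type*) [Field k]
    (D : MvPolynomial (Fin 3) k) (hD : D.IsHomogeneous 3) :
    let ξv : Fin 3 → MvPolynomial (Fin 3 ⊕ Fin 3) k := fun j => X (Sum.inl j)
    let Xv : Fin 3 → MvPolynomial (Fin 3 ⊕ Fin 3) k := fun j => X (Sum.inr j)
    let Dx : MvPolynomial (Fin 3 ⊕ Fin 3) k := rename Sum.inr D
    let E : Fin 3 → MvPolynomial (Fin 3 ⊕ Fin 3) k := fun i =>
      ∑ j : Fin 3, ξv j * pderiv (Sum.inr j) (pderiv (Sum.inr i) Dx)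
    let M : MvPolynomial (Fin 3 ⊕ Fin 3) k :=
      Matrix.det (Matrix.of
        ![![ξv 0, ξv 2, ξv 1], ![Xv 0, Xv 2, Xv 1], ![E 0, E 1, E 2]])
    pderiv (Sum.inr (0 : Fin 3)) (pderiv (Sum.inr (0 : Fin 3)) M) +
      2 * pderiv (Sum.inr (1 : Fin 3)) (pderiv (Sum.inr (2 : Fin 3)) M) = 0 := by
  intro ξv Xv Dx E M
  exact conicDual_det_eq_zero E (pderiv_inr_hessianMulVec_comm Dx)
    (pderiv_inr_pderiv_inr_hessianMulVec hD.rename_isHomogeneous)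

/-- **Morley's differential identity.**  Work in `k[ξ₀,ξ₁,ξ₂,X₀,X₁,X₂]`, where the `ξ`
variables are indexed by `Sum.inl` and the `X` variables by `Sum.inr`.  For a homogeneous
cubic `D` in the `X` variables set `Eᵢ = Σⱼ ξⱼ ∂²D/∂Xⱼ∂Xᵢ` and let `M(ξ,X)` be the
determinant of the matrix with rows `(ξ₀,ξ₂,ξ₁)`, `(X₀,X₂,X₁)`, `(E₀,E₁,E₂)`.  Then
`(∂²/∂X₀² + 2 ∂²/∂X₁∂X₂) M = 0`. -/
theorem morley_differential_identity (k : Type*) [Field k] [CharZero k]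
    (D : MvPolynomial (Fin 3) k) (hD : D.IsHomogeneous 3) :
    let ξv : Fin 3 → MvPolynomial (Fin 3 ⊕ Fin 3) k := fun j => X (Sum.inl j)
    let Xv : Fin 3 → MvPolynomial (Fin 3 ⊕ Fin 3) k := fun j => X (Sum.inr j)
    let Dx : MvPolynomial (Fin 3 ⊕ Fin 3) k := rename Sum.inr D
    let E : Fin 3 → MvPolynomial (Fin 3 ⊕ Fin 3) k := fun i =>
      ∑ j : Fin 3, ξv j * pderiv (Sum.inr j) (pderiv (Sum.inr i) Dx)
    let M : MvPolynomial (Fin 3 ⊕ Fin 3) k :=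
      Matrix.det (Matrix.of
        ![![ξv 0, ξv 2, ξv 1], ![Xv 0, Xv 2, Xv 1], ![E 0, E 1, E 2]])
    pderiv (Sum.inr (0 : Fin 3)) (pderiv (Sum.inr (0 : Fin 3)) M) +
      2 * pderiv (Sum.inr (1 : Fin 3)) (pderiv (Sum.inr (2 : Fin 3)) M) = 0 :=
  morley_differential_identity_general k D hD
end

section
/- Let C₀ = X₀(X₁² − X₂²), C₁ = X₁(X₂² − X₀²), C₂ = X₂(X₀² − X₁²) ∈ k[X₀,X₁,X₂] (the 2×2 minors of the matrix with rows (∂θ/∂Xᵢ) and (∂D/∂Xᵢ) for θ = X₀²+X₁²+X₂² and D = X₀X₁X₂). Then: (a) a nonzero vector v ∈ k³ satisfies C₀(v) = C₁(v) = C₂(v) = 0 if and only if v is a scalar multiple of one of the seven vectors (1,0,0), (0,1,0), (0,0,1), (1,1,1), (1,−1,1), (1,1,−1), (−1,1,1); (b) for each i ∈ {1,…,7}, no nonzero homogeneous quadratic polynomial vanishes at all six of these seven vectors other than the i-th, i.e. no six of the seven points lie on a conic. -/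
/-!
The common zeros of the minors are found by factoring: if `x ≠ 0` and `y ≠ 0` then
`x² = y² = z²`, and otherwise two coordinates vanish. For the conics, a ternary quadratic
form has six coefficients, and vanishing at six of the seven points is a square linear
system in them whose determinant is `±4` (when a point `(±1, ±1, ±1)` is omitted) or `±16`
(when a coordinate point is omitted), hence invertible in characteristic zero.
-/

open MvPolynomial Finsupp

theorem Finsupp.eq_iff_fin_three {M : Type*} [Zero M] {d e : Fin 3 →₀ M} :
    d = e ↔ d 0 = e 0 ∧ d 1 = e 1 ∧ d 2 = e 2 := by
  simp [Finsupp.ext_iff, Fin.forall_fin_succ]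

theorem Finsupp.degree_eq_two_cases {d : Fin 3 →₀ ℕ} (h : d.degree = 2) :
    d = single 0 2 ∨ d = single 1 2 ∨ d = single 2 2 ∨
      d = single 0 1 + single 1 1 ∨ d = single 0 1 + single 2 1 ∨
      d = single 1 1 + single 2 1 := by
  rw [degree_eq_sum, Fin.sum_univ_three] at h
  simp only [eq_iff_fin_three, add_apply, single_eq_same, single_eq_of_ne, ne_eq, one_ne_zero,
    zero_ne_one, Fin.reduceEq, not_false_eq_true, add_zero, zero_add]
  omega

theorem MvPolynomial.IsHomogeneous.exists_eq_ternary_quadratic {R : Type*} [CommSemiring R]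
    {q : MvPolynomial (Fin 3) R} (hq : q.IsHomogeneous 2) :
    ∃ a₀ a₁ a₂ b₀₁ b₀₂ b₁₂ : R, q = C a₀ * X 0 ^ 2 + C a₁ * X 1 ^ 2 + C a₂ * X 2 ^ 2 +
      C b₀₁ * (X 0 * X 1) + C b₀₂ * (X 0 * X 2) + C b₁₂ * (X 1 * X 2) := by
  refine ⟨coeff (single 0 2) q, coeff (single 1 2) q, coeff (single 2 2) q,
    coeff (single 0 1 + single 1 1) q, coeff (single 0 1 + single 2 1) q,
    coeff (single 1 1 + single 2 1) q, ?_⟩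
  simp only [X, monomial_pow, monomial_mul, C_mul_monomial, mul_one, one_pow]
  ext d
  simp only [coeff_add, coeff_monomial]
  by_cases hd : d.degree = 2
  · rcases degree_eq_two_cases hd with rfl | rfl | rfl | rfl | rfl | rfl <;>
      simp [eq_iff_fin_three]
  · rw [hq.coeff_eq_zero hd]
    split_ifs <;> subst_vars <;> simp at hd ⊢

def batemanPoint (k : Type*) [Ring k] : Fin 7 → Fin 3 → k :=
  ![![1, 0, 0], ![0, 1, 0], ![0, 0, 1], ![1, 1, 1], ![1, -1, 1], ![1, 1, -1], ![-1, 1, 1]]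

theorem minors_eq_zero_iff_exists_smul_batemanPoint {k : Type*} [CommRing k] [NoZeroDivisors k]
    (v : Fin 3 → k) :
    (v 0 * (v 1 ^ 2 - v 2 ^ 2) = 0 ∧ v 1 * (v 2 ^ 2 - v 0 ^ 2) = 0 ∧
      v 2 * (v 0 ^ 2 - v 1 ^ 2) = 0) ↔ ∃ (c : k) (i : Fin 7), v = c • batemanPoint k i := by
  constructor
  · rintro ⟨h0, h1, h2⟩
    have hcases : (v 1 = 0 ∧ v 2 = 0) ∨ (v 0 = 0 ∧ v 2 = 0) ∨ (v 0 = 0 ∧ v 1 = 0) ∨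
        ((v 1 = v 0 ∨ v 1 = -v 0) ∧ (v 2 = v 0 ∨ v 2 = -v 0)) := by
      grind [mul_eq_zero, sq_eq_sq_iff_eq_or_eq_neg, sub_eq_zero]
    rcases hcases with ⟨h1, h2⟩ | ⟨h0, h2⟩ | ⟨h0, h1⟩ | ⟨h1 | h1, h2 | h2⟩ <;>
      [refine ⟨v 0, 0, ?_⟩; refine ⟨v 1, 1, ?_⟩; refine ⟨v 2, 2, ?_⟩; refine ⟨v 0, 3, ?_⟩;
        refine ⟨v 0, 5, ?_⟩; refine ⟨v 0, 4, ?_⟩; refine ⟨-v 0, 6, ?_⟩] <;>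
      ext j <;> fin_cases j <;> simp [batemanPoint, *]
  · rintro ⟨c, i, rfl⟩
    fin_cases i <;> simp [batemanPoint]

theorem MvPolynomial.IsHomogeneous.eq_zero_of_eval_batemanPoint {k : Type*} [Field k] [CharZero k]
    {q : MvPolynomial (Fin 3) k} (hq : q.IsHomogeneous 2) (i : Fin 7)
    (h : ∀ j ≠ i, eval (batemanPoint k j) q = 0) : q = 0 := by
  obtain ⟨a₀, a₁, a₂, b₀₁, b₀₂, b₁₂, rfl⟩ := hq.exists_eq_ternary_quadratic
  suffices a₀ = 0 ∧ a₁ = 0 ∧ a₂ = 0 ∧ b₀₁ = 0 ∧ b₀₂ = 0 ∧ b₁₂ = 0 by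
    obtain ⟨rfl, rfl, rfl, rfl, rfl, rfl⟩ := this
    simp
  simp only [eval_add, eval_mul, eval_C, eval_pow, eval_X] at h
  fin_cases i <;>
    simp only [Fin.forall_fin_succ, batemanPoint, Matrix.cons_val_zero, Matrix.cons_val_one,
      Matrix.cons_val_succ, Matrix.cons_val, Fin.succ_zero_eq_one, Fin.succ_one_eq_two,
      Fin.reduceSucc, Fin.isValue, ne_eq, IsEmpty.forall_iff] at h <;>
    grind

theorem bateman_configuration_example_general (k : Type*) [Field k] [CharZero k] :
    let C0 : MvPolynomial (Fin 3) k := X 0 * (X 1 ^ 2 - X 2 ^ 2)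
    let C1 : MvPolynomial (Fin 3) k := X 1 * (X 2 ^ 2 - X 0 ^ 2)
    let C2 : MvPolynomial (Fin 3) k := X 2 * (X 0 ^ 2 - X 1 ^ 2)
    let P : Fin 7 → Fin 3 → k :=
      ![![1, 0, 0], ![0, 1, 0], ![0, 0, 1], ![1, 1, 1], ![1, -1, 1], ![1, 1, -1],
        ![-1, 1, 1]]
    (∀ v : Fin 3 → k, v ≠ 0 →
      ((eval v C0 = 0 ∧ eval v C1 = 0 ∧ eval v C2 = 0) ↔
        ∃ (c : k) (i : Fin 7), v = c • P i)) ∧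
    (∀ i : Fin 7, ¬ ∃ q : MvPolynomial (Fin 3) k, q ≠ 0 ∧ q.IsHomogeneous 2 ∧
      ∀ j, j ≠ i → eval (P j) q = 0) := by
  intro C0 C1 C2 P
  refine ⟨fun v _ => ?_, fun i ⟨q, hq0, hq, hvanish⟩ =>
    hq0 (hq.eq_zero_of_eval_batemanPoint i hvanish)⟩
  simp only [C0, C1, C2, eval_mul, eval_sub, eval_pow, eval_X]
  exact minors_eq_zero_iff_exists_smul_batemanPoint v

/-- The Bateman configuration of `θ = X₀²+X₁²+X₂²` and `D = X₀X₁X₂`: the common zeros of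
the minors `C₀ = X₀(X₁²−X₂²)`, `C₁ = X₁(X₂²−X₀²)`, `C₂ = X₂(X₀²−X₁²)` are exactly the
seven points `(1,0,0), (0,1,0), (0,0,1), (1,1,1), (1,−1,1), (1,1,−1), (−1,1,1)`, and no
six of these seven points lie on a conic. -/
theorem bateman_configuration_example (k : Type*) [Field k] [CharZero k] [IsAlgClosed k] :
    let C0 : MvPolynomial (Fin 3) k := X 0 * (X 1 ^ 2 - X 2 ^ 2)
    let C1 : MvPolynomial (Fin 3) k := X 1 * (X 2 ^ 2 - X 0 ^ 2)
    let C2 : MvPolynomial (Fin 3) k := X 2 * (X 0 ^ 2 - X 1 ^ 2)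
    let P : Fin 7 → Fin 3 → k :=
      ![![1, 0, 0], ![0, 1, 0], ![0, 0, 1], ![1, 1, 1], ![1, -1, 1], ![1, 1, -1],
        ![-1, 1, 1]]
    (∀ v : Fin 3 → k, v ≠ 0 →
      ((eval v C0 = 0 ∧ eval v C1 = 0 ∧ eval v C2 = 0) ↔
        ∃ (c : k) (i : Fin 7), v = c • P i)) ∧
    (∀ i : Fin 7, ¬ ∃ q : MvPolynomial (Fin 3) k, q ≠ 0 ∧ q.IsHomogeneous 2 ∧
      ∀ j, j ≠ i → eval (P j) q = 0) :=
  bateman_configuration_example_general k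
end

section
/- In the space of homogeneous quadratic forms in k[X₀,X₁,X₂], the k-linear span of the set of forms { (ξ₀X₀ + ξ₁X₂ + ξ₂X₁)·(ξ₁X₂ − ξ₂X₁) : ξ = (ξ₀,ξ₁,ξ₂) ∈ k³ } is exactly the subspace of quadratic forms whose coefficient of X₀² and coefficient of X₁X₂ both vanish; in particular this span has dimension 4. -/
open MvPolynomial

/-!
Expanding, `(ξ₀X₀ + ξ₁X₂ + ξ₂X₁)(ξ₁X₂ − ξ₂X₁) = ξ₀ξ₁·X₀X₂ − ξ₀ξ₂·X₀X₁ + ξ₁²·X₂² − ξ₂²·X₁²`, so every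
such conic lies in the span of the four monomials `X₀X₂, X₀X₁, X₂², X₁²`; conversely each of these
monomials is a difference of at most two such conics (take `ξ` among `(1,1,0), (0,1,0), (0,0,1),
(1,0,1)`). These four monomials are exactly the quadratic monomials other than `X₀²` and `X₁X₂`.
-/

namespace MvPolynomial

variable {σ R : Type*}

theorem mem_restrictSupport_diff_iff [CommSemiring R] {s t : Set (σ →₀ ℕ)}
    {p : MvPolynomial σ R} :
    p ∈ restrictSupport R (s \ t) ↔ p ∈ restrictSupport R s ∧ ∀ d ∈ t, coeff d p = 0 := by
  simp only [mem_restrictSupport_iff, Set.subset_sdiff, Set.disjoint_right, Finset.mem_coe,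
    mem_support_iff, not_not]

theorem isHomogeneous_iff_mem_restrictSupport [CommSemiring R] {p : MvPolynomial σ R} {n : ℕ} :
    p.IsHomogeneous n ↔ p ∈ restrictSupport R {d | d.degree = n} := by
  rw [← mem_homogeneousSubmodule, homogeneousSubmodule_eq_finsupp_supported]
  rfl

theorem restrictSupport_range_eq_span [CommSemiring R] {ι : Type*} (e : ι → σ →₀ ℕ) :
    restrictSupport R (Set.range e) = Submodule.span R (Set.range fun i ↦ monomial (e i) 1) := by
  rw [restrictSupport_eq_span, ← Set.range_comp]
  rfl

theorem rank_restrictSupport_range [CommRing R] [StrongRankCondition R] {ι : Type*} [Fintype ι]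
    {e : ι → σ →₀ ℕ} (he : e.Injective) :
    Module.rank R (restrictSupport R (Set.range e)) = Fintype.card ι := by
  classical
  rw [rank_eq_card_basis (basisRestrictSupport R (Set.range e)), Set.card_range_of_injective he]

end MvPolynomial

namespace Finsupp

theorem eq_iff_fin_three_s15 {d e : Fin 3 →₀ ℕ} : d = e ↔ d 0 = e 0 ∧ d 1 = e 1 ∧ d 2 = e 2 := by
  simp [Finsupp.ext_iff, Fin.forall_fin_succ]

theorem degree_fin_three (d : Fin 3 →₀ ℕ) : d.degree = d 0 + d 1 + d 2 := by
  rw [degree_eq_sum, Fin.sum_univ_three]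

end Finsupp

section MorleyConics

open Finsupp in
noncomputable def conicExponent : Fin 4 → Fin 3 →₀ ℕ :=
  ![single 0 1 + single 2 1, single 0 1 + single 1 1, single 2 2, single 1 2]

theorem conicExponent_injective : conicExponent.Injective := by
  intro i j h
  rw [Finsupp.eq_iff_fin_three_s15] at h
  fin_cases i <;> fin_cases j <;> simp_all [conicExponent]

open Finsupp in
theorem quadraticExponents_diff_eq_range_conicExponent :
    {d : Fin 3 →₀ ℕ | d.degree = 2} \ {single 0 2, single 1 1 + single 2 1} =
      Set.range conicExponent := by
  ext d
  simp only [Set.mem_sdiff, Set.mem_ofPred_eq, Set.mem_insert_iff, Set.mem_singleton_iff,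
    Set.mem_range, Fin.exists_fin_succ, IsEmpty.exists_iff, or_false, degree_fin_three,
    eq_iff_fin_three_s15, conicExponent, Matrix.cons_val, Finsupp.coe_add, Pi.add_apply, single_apply,
    Fin.succ_zero_eq_one, Fin.succ_one_eq_two, Fin.reduceSucc, Fin.reduceEq, if_true, if_false]
  omega

variable (k : Type*) [Field k]

noncomputable def conicMonomial : Fin 4 → MvPolynomial (Fin 3) k :=
  ![X 0 * X 2, X 0 * X 1, X 2 ^ 2, X 1 ^ 2]

theorem monomial_conicExponent (i : Fin 4) :
    monomial (conicExponent i) (1 : k) = conicMonomial k i := by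
  fin_cases i <;> simp [conicExponent, conicMonomial, X, monomial_mul, monomial_pow]

noncomputable def morleyConic (ξ : Fin 3 → k) : MvPolynomial (Fin 3) k :=
  (C (ξ 0) * X 0 + C (ξ 1) * X 2 + C (ξ 2) * X 1) * (C (ξ 1) * X 2 - C (ξ 2) * X 1)

theorem morleyConic_eq (ξ : Fin 3 → k) :
    morleyConic k ξ = C (ξ 0 * ξ 1) * (X 0 * X 2) - C (ξ 0 * ξ 2) * (X 0 * X 1)
      + C (ξ 1 ^ 2) * X 2 ^ 2 - C (ξ 2 ^ 2) * X 1 ^ 2 := by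
  simp only [morleyConic, map_mul, map_pow]
  ring

theorem morleyConic_mem_span_conicMonomial (ξ : Fin 3 → k) :
    morleyConic k ξ ∈ Submodule.span k (Set.range (conicMonomial k)) := by
  rw [Submodule.mem_span_range_iff_exists_fun]
  refine ⟨![ξ 0 * ξ 1, -(ξ 0 * ξ 2), ξ 1 ^ 2, -ξ 2 ^ 2], ?_⟩
  simp only [Fin.sum_univ_four, conicMonomial, morleyConic_eq, smul_eq_C_mul, Matrix.cons_val,
    map_neg]
  ring

theorem conicMonomial_mem_span_morleyConic (i : Fin 4) :
    conicMonomial k i ∈ Submodule.span k (Set.range (morleyConic k)) := by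
  have hmem (ξ : Fin 3 → k) : morleyConic k ξ ∈ Submodule.span k (Set.range (morleyConic k)) :=
    Submodule.subset_span ⟨ξ, rfl⟩
  fin_cases i <;> simp only [conicMonomial, Fin.reduceFinMk, Matrix.cons_val]
  · convert sub_mem (hmem ![1, 1, 0]) (hmem ![0, 1, 0]) using 1
    simp [morleyConic_eq]
  · convert neg_mem (sub_mem (hmem ![1, 0, 1]) (hmem ![0, 0, 1])) using 1
    simp [morleyConic_eq]
  · convert hmem ![0, 1, 0] using 1
    simp [morleyConic_eq]
  · convert neg_mem (hmem ![0, 0, 1]) using 1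
    simp [morleyConic_eq]

theorem span_range_morleyConic :
    Submodule.span k (Set.range (morleyConic k)) =
      restrictSupport k (Set.range conicExponent) := by
  rw [restrictSupport_range_eq_span]
  simp only [monomial_conicExponent]
  apply le_antisymm <;> rw [Submodule.span_le, Set.range_subset_iff]
  · exact morleyConic_mem_span_conicMonomial k
  · exact conicMonomial_mem_span_morleyConic k

end MorleyConics

theorem span_of_morley_conics_general (k : Type*) [Field k] :
    let S : Set (MvPolynomial (Fin 3) k) :=
      {q | ∃ ξ : Fin 3 → k,
        q = (MvPolynomial.C (ξ 0) * X 0 + MvPolynomial.C (ξ 1) * X 2 +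
              MvPolynomial.C (ξ 2) * X 1) *
            (MvPolynomial.C (ξ 1) * X 2 - MvPolynomial.C (ξ 2) * X 1)}
    (∀ q : MvPolynomial (Fin 3) k,
      q ∈ Submodule.span k S ↔
        q.IsHomogeneous 2 ∧ coeff (Finsupp.single (0 : Fin 3) 2) q = 0 ∧
          coeff (Finsupp.single (1 : Fin 3) 1 + Finsupp.single (2 : Fin 3) 1) q = 0) ∧
    Module.rank k ↥(Submodule.span k S) = 4 := by
  intro S
  have hS : S = Set.range (morleyConic k) := Set.ext fun q ↦ exists_congr fun ξ ↦ eq_comm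
  rw [hS, span_range_morleyConic]
  refine ⟨fun q ↦ ?_, ?_⟩
  · rw [← quadraticExponents_diff_eq_range_conicExponent, mem_restrictSupport_diff_iff,
      ← isHomogeneous_iff_mem_restrictSupport]
    simp
  · rw [rank_restrictSupport_range conicExponent_injective, Fintype.card_fin]
    norm_num

/-- The span of the quadratic forms `(ξ₀X₀+ξ₁X₂+ξ₂X₁)(ξ₁X₂−ξ₂X₁)`, as `ξ` ranges over
`k³`, is exactly the space of quadratic forms whose coefficients of `X₀²` and of `X₁X₂`
vanish; in particular it has dimension 4. -/
theorem span_of_morley_conics (k : Type*) [Field k] [CharZero k] :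
    let S : Set (MvPolynomial (Fin 3) k) :=
      {q | ∃ ξ : Fin 3 → k,
        q = (MvPolynomial.C (ξ 0) * X 0 + MvPolynomial.C (ξ 1) * X 2 +
              MvPolynomial.C (ξ 2) * X 1) *
            (MvPolynomial.C (ξ 1) * X 2 - MvPolynomial.C (ξ 2) * X 1)}
    (∀ q : MvPolynomial (Fin 3) k,
      q ∈ Submodule.span k S ↔
        q.IsHomogeneous 2 ∧ coeff (Finsupp.single (0 : Fin 3) 2) q = 0 ∧
          coeff (Finsupp.single (1 : Fin 3) 1 + Finsupp.single (2 : Fin 3) 1) q = 0) ∧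
    Module.rank k ↥(Submodule.span k S) = 4 :=
  span_of_morley_conics_general k
end
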